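/- The map sending a history in the complete history sDAG on labels Y to its associated internally labeled tree (dropping ρ and its outgoing edge and labeling each node (ℓ,U) by ℓ), and the map sending an internally labeled tree t with labels in Y to the history (V_t,E_t) (where each node w is sent to v_w = (φ(w), {C_{w'} : w' a child of w}), with C_{w'} the set of leaf labels below w'), are mutually inverse up to label-preserving isomorphism of labeled trees. In particular, these maps give a bijective correspondence between histories in the complete history sDAG on labels Y and isomorphism classes of internally labeled trees with labels in Y. -/

import Mathlib

/-!
Along an edge `(ℓ, U) → v` of a history sDAG, `CU(v) ∈ U`, and a clade of a subpartition is a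
proper subset of its union (there is a second, disjoint, nonempty clade); so clade unions shrink
strictly along edges, and a leaf `(ℓ, ∅)` has clade union `{ℓ}`. Induction on `|CU(v)|` shows
that the leaf labels below a node are exactly its clade union, so the tree-to-history map sends
every node of a history back to itself.

Conversely, in a labeled tree the leaf-label sets `C_w` of siblings are disjoint (parents are
unique and leaf labels injective) and, as there are no unifurcations, `C_w` strictly shrinks
along edges. Hence `w ↦ C_w` is injective on nodes, which makes `w ↦ v_w` injective, the child
clades a subpartition, and the descendant edge of each node-clade pair unique.
-/

universe u v

/-- A node of a history sDAG: either the universal ancestor (UA) node `ρ`,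
or a node carrying a label `ℓ : Y` and a subpartition `U : Set (Set Y)`. -/
inductive HNode (Y : Type u) : Type u
  | ua : HNode Y
  | node : Y → Set (Set Y) → HNode Y

namespace HistorySDAGs

variable {Y : Type u}

/-- `U ∈ Part(Y)`: `U` is a set of pairwise disjoint nonempty (finite) clades with `|U| ≠ 1`. -/
def IsPart (U : Set (Set Y)) : Prop :=
  (∀ C ∈ U, C ≠ ∅) ∧
  (∀ C₁ ∈ U, ∀ C₂ ∈ U, C₁ ≠ C₂ → Disjoint C₁ C₂) ∧
  (∀ C, U ≠ {C}) ∧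
  U.Finite ∧ ∀ C ∈ U, C.Finite

open Classical in
/-- The clade union of a node. -/
noncomputable def cladeUnion : HNode Y → Set Y
  | HNode.ua => ∅
  | HNode.node ℓ U => if U = ∅ then {ℓ} else ⋃₀ U

/-- Reachability via directed edges in `E`. -/
def Reach (E : Set (HNode Y × HNode Y)) (a b : HNode Y) : Prop :=
  Relation.ReflTransGen (fun x y => (x, y) ∈ E) a b

/-- `(V, E)` is a history sDAG on labels `Y`. -/
structure IsHSDAG (V : Set (HNode Y)) (E : Set (HNode Y × HNode Y)) : Prop where
  ua_mem : HNode.ua ∈ V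
  valid : ∀ ℓ U, HNode.node ℓ U ∈ V → IsPart U
  edge_mem : ∀ e ∈ E, e.1 ∈ V ∧ e.2 ∈ V
  reach_ua : ∀ v ∈ V, Reach E HNode.ua v
  no_in_ua : ∀ v : HNode Y, (v, HNode.ua) ∉ E
  edge_clade : ∀ ℓ U v, (HNode.node ℓ U, v) ∈ E → cladeUnion v ∈ U
  clade_cov : ∀ ℓ U, HNode.node ℓ U ∈ V → ∀ C ∈ U,
      ∃ v, (HNode.node ℓ U, v) ∈ E ∧ cladeUnion v = C

/-- Every node-clade pair of `V` has exactly one descendant edge in `E`. -/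
def UniqueDesc (V : Set (HNode Y)) (E : Set (HNode Y × HNode Y)) : Prop :=
  ∀ ℓ U, HNode.node ℓ U ∈ V → ∀ C ∈ U,
    ∃! vc, (HNode.node ℓ U, vc) ∈ E ∧ cladeUnion vc = C

/-- `(V, E)` is a history: a history sDAG in which `ρ` has exactly one child and
each node-clade pair has exactly one descendant edge. -/
def IsHistory (V : Set (HNode Y)) (E : Set (HNode Y × HNode Y)) : Prop :=
  IsHSDAG V E ∧ (∃! v, (HNode.ua, v) ∈ E) ∧ UniqueDesc V E

/-- `(Vs, Es)` is a subhistory of `(V, E)` with root node `vr`. -/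
structure IsSubhistoryRooted (V : Set (HNode Y)) (E : Set (HNode Y × HNode Y))
    (Vs : Set (HNode Y)) (Es : Set (HNode Y × HNode Y)) (vr : HNode Y) : Prop where
  subV : Vs ⊆ V
  subE : Es ⊆ E
  ua_not_mem : HNode.ua ∉ Vs
  edge_mem : ∀ e ∈ Es, e.1 ∈ Vs ∧ e.2 ∈ Vs
  root_mem : vr ∈ Vs
  reach_root : ∀ v ∈ Vs, Reach Es vr v
  unique_desc : ∀ ℓ U, HNode.node ℓ U ∈ Vs → ∀ C ∈ U,
      ∃! vc, (HNode.node ℓ U, vc) ∈ Es ∧ cladeUnion vc = C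

/-- `(Vs, Es)` is a subhistory of `(V, E)`. -/
def IsSubhistory (V : Set (HNode Y)) (E : Set (HNode Y × HNode Y))
    (Vs : Set (HNode Y)) (Es : Set (HNode Y × HNode Y)) : Prop :=
  ∃ vr, IsSubhistoryRooted V E Vs Es vr

/-- `(Vt, Et)` is a history in (a trim of) the history sDAG `(V, E)`. -/
def HistoryIn (V : Set (HNode Y)) (E : Set (HNode Y × HNode Y))
    (Vt : Set (HNode Y)) (Et : Set (HNode Y × HNode Y)) : Prop :=
  Vt ⊆ V ∧ Et ⊆ E ∧ IsHistory Vt Et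

/-- The set of labels of leaf nodes in a node set. -/
def leafLabels (Vt : Set (HNode Y)) : Set Y := {ℓ | HNode.node ℓ ∅ ∈ Vt}

/-- A candidate history/graph: a pair of a node set and an edge set. -/
abbrev Hist (Y : Type u) := Set (HNode Y) × Set (HNode Y × HNode Y)

/-- The node set of the history sDAG constructed from the collection `T`. -/
def unionV (T : Set (Hist Y)) : Set (HNode Y) := ⋃ t ∈ T, t.1

/-- The edge set of the history sDAG constructed from the collection `T`. -/
def unionE (T : Set (Hist Y)) : Set (HNode Y × HNode Y) := ⋃ t ∈ T, t.2

/-- The node set of the complete history sDAG on labels `Y`. -/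
def completeV (Y : Type u) : Set (HNode Y) :=
  {v | v = HNode.ua ∨ ∃ ℓ U, v = HNode.node ℓ U ∧ IsPart U}

/-- The edge set of the complete history sDAG on labels `Y`. -/
def completeE (Y : Type u) : Set (HNode Y × HNode Y) :=
  {e | e.1 ∈ completeV Y ∧ e.2 ∈ completeV Y ∧ e.2 ≠ HNode.ua ∧
    (e.1 = HNode.ua ∨ ∃ ℓ U, e.1 = HNode.node ℓ U ∧ cladeUnion e.2 ∈ U)}

variable {W : Type v}

/-- The weight `g_f` of a subgraph with edge set `Es`: the sum of `f` over all edges. -/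
noncomputable def gweight [AddCommMonoid W] (f : HNode Y × HNode Y → W)
    (Es : Set (HNode Y × HNode Y)) : W := ∑ᶠ e ∈ Es, f e

/-- The order is total on the subset `S` of `W`. -/
def TotalOn [PartialOrder W] (S : Set W) : Prop := ∀ a ∈ S, ∀ b ∈ S, a ≤ b ∨ b ≤ a

/-- The order respects addition on the subset `S` of `W`. -/
def RespectsAdd [AddCommMonoid W] [PartialOrder W] (S : Set W) : Prop :=
  ∀ a ∈ S, ∀ b ∈ S, ∀ c : W, a < b ↔ a + c < b + c

/-- Weights of subhistories of `(V, E)` rooted at `v`. -/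
def subWeights [AddCommMonoid W] (f : HNode Y × HNode Y → W)
    (V : Set (HNode Y)) (E : Set (HNode Y × HNode Y)) (v : HNode Y) : Set W :=
  {w | ∃ Vs Es, IsSubhistoryRooted V E Vs Es v ∧ w = gweight f Es}

/-- Weights of augmented subhistories below the node-clade pair `(v, C)`. -/
def augWeights [AddCommMonoid W] (f : HNode Y × HNode Y → W)
    (V : Set (HNode Y)) (E : Set (HNode Y × HNode Y)) (v : HNode Y) (C : Set Y) : Set W :=
  {w | ∃ vc Vs Es, (v, vc) ∈ E ∧ cladeUnion vc = C ∧ IsSubhistoryRooted V E Vs Es vc ∧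
    w = gweight f (insert (v, vc) Es)}

/-- Weights of histories in `(V, E)`. -/
def historyWeights [AddCommMonoid W] (f : HNode Y × HNode Y → W)
    (V : Set (HNode Y)) (E : Set (HNode Y × HNode Y)) : Set W :=
  {w | ∃ Vt Et, HistoryIn V E Vt Et ∧ w = gweight f Et}

/-- `W` is clade-ordered with respect to `f` and `(V, E)`. -/
def CladeOrdered [AddCommMonoid W] [PartialOrder W] (f : HNode Y × HNode Y → W)
    (V : Set (HNode Y)) (E : Set (HNode Y × HNode Y)) : Prop :=
  (∀ v ∈ V, v ≠ HNode.ua →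
      TotalOn (subWeights f V E v) ∧ RespectsAdd (subWeights f V E v)) ∧
  (∀ ℓ U, HNode.node ℓ U ∈ V → ∀ C ∈ U,
      TotalOn (augWeights f V E (HNode.node ℓ U) C) ∧
      RespectsAdd (augWeights f V E (HNode.node ℓ U) C)) ∧
  TotalOn (historyWeights f V E)

/-- The minimum-weight histories in `(V, E)` with respect to `g_f`. -/
def minHistories [AddCommMonoid W] [PartialOrder W] (f : HNode Y × HNode Y → W)
    (V : Set (HNode Y)) (E : Set (HNode Y × HNode Y)) : Set (Hist Y) :=
  {t | HistoryIn V E t.1 t.2 ∧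
    ∀ t' : Hist Y, HistoryIn V E t'.1 t'.2 → gweight f t.2 ≤ gweight f t'.2}

open Classical in
/-- The map `q` collapsing the edge `(vp, vc)`, sending both `vp` and `vc` to `vp'`. -/
noncomputable def collapseMap (vp vc vp' : HNode Y) (v : HNode Y) : HNode Y :=
  if v = vp ∨ v = vc then vp' else v

/-- The history obtained by collapsing the edge `(vp, vc)` (into `vp'`) in `t`. -/
noncomputable def collapseEdgeHist (vp vc vp' : HNode Y) (t : Hist Y) : Hist Y :=
  (collapseMap vp vc vp' '' t.1,
   (fun e : HNode Y × HNode Y => (collapseMap vp vc vp' e.1, collapseMap vp vc vp' e.2)) ''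
     (t.2 \ {(vp, vc)}))

/-- The new parent node `(ℓ_p, (U_p ∪ U_c) \ {CU(v_c)})` formed when collapsing an edge. -/
noncomputable def newParent : HNode Y → HNode Y → HNode Y
  | HNode.node ℓp Up, HNode.node ℓc Uc =>
      HNode.node ℓp ((Up ∪ Uc) \ {cladeUnion (HNode.node ℓc Uc)})
  | v, _ => v

/-- `t'` results from `t` by collapsing one label-collapsible edge. -/
def LabelCollapseStep (t t' : Hist Y) : Prop :=
  ∃ ℓ Up Uc, (HNode.node ℓ Up, HNode.node ℓ Uc) ∈ t.2 ∧ Uc ≠ ∅ ∧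
    t' = collapseEdgeHist (HNode.node ℓ Up) (HNode.node ℓ Uc)
        (newParent (HNode.node ℓ Up) (HNode.node ℓ Uc)) t

/-- `t` is label-collapsed: it has no label-collapsible edge. -/
def LabelCollapsed (t : Hist Y) : Prop :=
  ∀ ℓ Up Uc, (HNode.node ℓ Up, HNode.node ℓ Uc) ∈ t.2 → Uc = ∅

/-- `(vp, vc)` is a label-collapsible edge of `G`. -/
def LabelCollapsibleEdge (G : Hist Y) (vp vc : HNode Y) : Prop :=
  (vp, vc) ∈ G.2 ∧ ∃ ℓ Up Uc, vp = HNode.node ℓ Up ∧ vc = HNode.node ℓ Uc ∧ Uc ≠ ∅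

/-- `T` is a label-collapsible edge cover of `G`. -/
def LabelCollapsibleEdgeCover (G : Hist Y) (T : Set (Hist Y)) : Prop :=
  (∀ t ∈ T, HistoryIn G.1 G.2 t.1 t.2) ∧
  (∀ e ∈ G.2, ∃ t ∈ T, e ∈ t.2) ∧
  (∀ vp vc, LabelCollapsibleEdge G vp vc →
    ∀ Vs Es, IsSubhistory G.1 G.2 Vs Es → (vp, vc) ∈ Es →
      ∃ t ∈ T, Vs ⊆ t.1 ∧ Es ⊆ t.2)

open Classical in
/-- Collapsing the edge `(vp, vc)` in the history sDAG `G`, via `E⁺`, `R`, `E⁻`, `E'`, `V'`. -/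
noncomputable def collapseDAGEdge (vp vc : HNode Y) (G : Hist Y) : Hist Y :=
  let vp' := newParent vp vc
  let Eplus : Set (HNode Y × HNode Y) :=
    (G.2 ∪ {e | ∃ v, e = (v, vp') ∧ (v, vp) ∈ G.2}
        ∪ {e | ∃ v, e = (vp', v) ∧ (vp, v) ∈ G.2 ∧ cladeUnion v ≠ cladeUnion vc}
        ∪ {e | ∃ v, e = (vp', v) ∧ (vc, v) ∈ G.2}) \ {(vp, vc)}
  let R : Set (HNode Y × HNode Y) :=
    if ∃ v, (vp, v) ∈ Eplus ∧ cladeUnion v = cladeUnion vc then ∅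
    else {e ∈ Eplus | e.2 = vp}
  let Eminus := Eplus \ R
  let E' := {e ∈ Eminus | Reach Eminus HNode.ua e.1}
  ({v | ∃ e ∈ E', v = e.1 ∨ v = e.2}, E')

/-- `t'` is obtained from `t` by a subhistory swap, replacing a subhistory of `t` by a
conforming subhistory of some history in `S`. -/
def SwapStepUsing (S : Set (Hist Y)) (t t' : Hist Y) : Prop :=
  ∃ t₂ ∈ S, ∃ Vs' Es' vr' vp,
    IsSubhistoryRooted t₂.1 t₂.2 Vs' Es' vr' ∧ (vp, vr') ∈ t₂.2 ∧
    ∃ Vs Es vr, IsSubhistoryRooted t.1 t.2 Vs Es vr ∧ (vp, vr) ∈ t.2 ∧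
      leafLabels Vs = leafLabels Vs' ∧
      t' = ((t.1 \ Vs) ∪ Vs', (t.2 \ (Es ∪ {(vp, vr)})) ∪ (Es' ∪ {(vp, vr')}))

/-- Leaves of an abstract rooted graph. -/
def IsLeafIn {α : Type v} (nodes : Set α) (edges : Set (α × α)) (x : α) : Prop :=
  x ∈ nodes ∧ ∀ c, (x, c) ∉ edges

/-- Reachability via directed edges in an abstract graph. -/
def GReach {α : Type v} (edges : Set (α × α)) (a b : α) : Prop :=
  Relation.ReflTransGen (fun x y => (x, y) ∈ edges) a b

/-- An (internally) labeled tree: a rooted multifurcating tree with no unifurcations,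
with node labels in `Y` that are injective on leaves. -/
structure IsLabeledTree {α : Type v} (nodes : Set α) (edges : Set (α × α))
    (root : α) (lab : α → Y) : Prop where
  root_mem : root ∈ nodes
  edge_mem : ∀ e ∈ edges, e.1 ∈ nodes ∧ e.2 ∈ nodes
  reach_root : ∀ x ∈ nodes, GReach edges root x
  unique_parent : ∀ x a b, (a, x) ∈ edges → (b, x) ∈ edges → a = b
  no_parent_root : ∀ a, (a, root) ∉ edges
  acyclic : ∀ x, ¬ Relation.TransGen (fun a b => (a, b) ∈ edges) x x
  no_unif : ∀ x ∈ nodes, ¬ (∃! c, (x, c) ∈ edges)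
  leaf_inj : ∀ x y, IsLeafIn nodes edges x → IsLeafIn nodes edges y → lab x = lab y → x = y
  finite : nodes.Finite

/-- The set `C_w` of leaf labels below a node `w` of an abstract labeled tree. -/
def leavesBelow {α : Type v} (nodes : Set α) (edges : Set (α × α)) (lab : α → Y) (w : α) :
    Set Y :=
  {y | ∃ u, IsLeafIn nodes edges u ∧ GReach edges w u ∧ y = lab u}

/-- The history sDAG node `v_w` associated to a node `w` of a labeled tree. -/
def treeNodeOf {α : Type v} (nodes : Set α) (edges : Set (α × α)) (lab : α → Y) (w : α) :
    HNode Y :=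
  HNode.node (lab w) {C | ∃ w', (w, w') ∈ edges ∧ C = leavesBelow nodes edges lab w'}

/-- The node set `V_t` of the history associated to a labeled tree. -/
def treeToHistV {α : Type v} (nodes : Set α) (edges : Set (α × α)) (lab : α → Y) :
    Set (HNode Y) :=
  insert HNode.ua (treeNodeOf nodes edges lab '' nodes)

/-- The edge set `E_t` of the history associated to a labeled tree. -/
def treeToHistE {α : Type v} (nodes : Set α) (edges : Set (α × α)) (root : α) (lab : α → Y) :
    Set (HNode Y × HNode Y) :=
  insert (HNode.ua, treeNodeOf nodes edges lab root)
    {e | ∃ w₁ w₂, (w₁, w₂) ∈ edges ∧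
      e = (treeNodeOf nodes edges lab w₁, treeNodeOf nodes edges lab w₂)}


lemma cladeUnion_node_empty (ℓ : Y) : cladeUnion (HNode.node ℓ (∅ : Set (Set Y))) = {ℓ} := by
  simp [cladeUnion]

lemma cladeUnion_node_of_ne_empty (ℓ : Y) {U : Set (Set Y)} (hU : U ≠ ∅) :
    cladeUnion (HNode.node ℓ U) = ⋃₀ U := by
  simp [cladeUnion, hU]

lemma IsPart.exists_ne {U : Set (Set Y)} (hU : IsPart U) {C : Set Y} (hC : C ∈ U) :
    ∃ C' ∈ U, C' ≠ C := by
  by_contra! h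
  exact hU.2.2.1 C (Set.eq_singleton_iff_unique_mem.mpr ⟨hC, h⟩)

lemma IsPart.ssubset_sUnion {U : Set (Set Y)} (hU : IsPart U) {C : Set Y} (hC : C ∈ U) :
    C ⊂ ⋃₀ U := by
  obtain ⟨C', hC', hne⟩ := hU.exists_ne hC
  obtain ⟨y, hy⟩ := Set.nonempty_iff_ne_empty.mpr (hU.1 C' hC')
  refine Set.ssubset_iff_subset_ne.mpr ⟨Set.subset_sUnion_of_mem hC, fun h => ?_⟩
  have hyC : y ∈ C := h ▸ Set.mem_sUnion_of_mem hy hC'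
  exact Set.disjoint_left.mp (hU.2.1 C' hC' C hC hne) hy hyC

lemma IsPart.finite_sUnion {U : Set (Set Y)} (hU : IsPart U) : (⋃₀ U).Finite :=
  hU.2.2.2.1.sUnion hU.2.2.2.2

section HistoryToTree

variable {V : Set (HNode Y)} {E : Set (HNode Y × HNode Y)}

lemma IsHSDAG.ne_ua_of_mem (hS : IsHSDAG V E) {a b : HNode Y} (h : (a, b) ∈ E) :
    b ≠ HNode.ua :=
  fun hb => hS.no_in_ua a (hb ▸ h)

lemma IsHSDAG.subset_completeV (hS : IsHSDAG V E) : V ⊆ completeV Y := by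
  rintro (_ | ⟨ℓ, U⟩) hv
  · exact Or.inl rfl
  · exact Or.inr ⟨ℓ, U, rfl, hS.valid ℓ U hv⟩

lemma IsHSDAG.subset_completeE (hS : IsHSDAG V E) : E ⊆ completeE Y := by
  rintro ⟨a, b⟩ he
  refine ⟨hS.subset_completeV (hS.edge_mem _ he).1, hS.subset_completeV (hS.edge_mem _ he).2,
    hS.ne_ua_of_mem he, ?_⟩
  cases a with
  | ua => exact Or.inl rfl
  | node ℓ U => exact Or.inr ⟨ℓ, U, rfl, hS.edge_clade ℓ U b he⟩

lemma IsHistory.historyIn_complete (hH : IsHistory V E) :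
    HistoryIn (completeV Y) (completeE Y) V E :=
  ⟨hH.1.subset_completeV, hH.1.subset_completeE, hH⟩

lemma IsHSDAG.cladeUnion_subset_of_reach (hS : IsHSDAG V E) {v u : HNode Y}
    (hv : v ≠ HNode.ua) (h : Reach E v u) : cladeUnion u ⊆ cladeUnion v := by
  induction h with
  | refl => exact subset_rfl
  | @tail m x hvm hmx ih =>
    have hm : m ≠ HNode.ua := by
      rcases hvm.cases_tail with rfl | ⟨_, _, h⟩
      exacts [hv, hS.ne_ua_of_mem h]
    cases m with
    | ua => exact absurd rfl hm
    | node ℓ U =>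
      have hx := hS.edge_clade ℓ U x hmx
      have hU : U ≠ ∅ := by rintro rfl; exact hx
      rw [cladeUnion_node_of_ne_empty ℓ hU] at ih
      exact (Set.subset_sUnion_of_mem hx).trans ih

lemma IsHSDAG.exists_eq_leaf_of_isLeafIn (hS : IsHSDAG V E) {r u : HNode Y}
    (hu : IsLeafIn (V \ {HNode.ua}) (E \ {(HNode.ua, r)}) u) : ∃ ℓ, u = HNode.node ℓ ∅ := by
  obtain ⟨⟨huV, hua⟩, hnoc⟩ := hu
  cases u with
  | ua => exact absurd rfl hua
  | node ℓ U =>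
    refine ⟨ℓ, congrArg _ (Set.not_nonempty_iff_eq_empty.mp ?_)⟩
    rintro ⟨C, hC⟩
    obtain ⟨w, hw, -⟩ := hS.clade_cov ℓ U huV C hC
    exact hnoc w ⟨hw, by simp⟩

lemma IsHSDAG.leavesBelow_subset_cladeUnion (hS : IsHSDAG V E) {lab' : HNode Y → Y}
    (hlab' : ∀ ℓ U, lab' (HNode.node ℓ U) = ℓ) (r : HNode Y) {v : HNode Y}
    (hv : v ≠ HNode.ua) :
    leavesBelow (V \ {HNode.ua}) (E \ {(HNode.ua, r)}) lab' v ⊆ cladeUnion v := by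
  rintro _ ⟨u, hu, hvu, rfl⟩
  obtain ⟨ℓ, rfl⟩ := hS.exists_eq_leaf_of_isLeafIn hu
  apply hS.cladeUnion_subset_of_reach hv (Relation.ReflTransGen.mono (fun _ _ h => h.1) _ _ hvu)
  simp [hlab', cladeUnion_node_empty]

lemma IsHSDAG.cladeUnion_subset_leavesBelow (hS : IsHSDAG V E) {lab' : HNode Y → Y}
    (hlab' : ∀ ℓ U, lab' (HNode.node ℓ U) = ℓ) (r : HNode Y) {v : HNode Y} (hv : v ∈ V)
    (hvua : v ≠ HNode.ua) :
    cladeUnion v ⊆ leavesBelow (V \ {HNode.ua}) (E \ {(HNode.ua, r)}) lab' v := by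
  induction hn : (cladeUnion v).ncard using Nat.strong_induction_on generalizing v with
  | _ n ih =>
  cases v with
  | ua => exact absurd rfl hvua
  | node ℓ U =>
    rcases eq_or_ne U ∅ with rfl | hne
    · rintro y hy
      rw [cladeUnion_node_empty, Set.mem_singleton_iff] at hy
      subst hy
      exact ⟨_, ⟨⟨hv, hvua⟩, fun c hc => hS.edge_clade _ _ c hc.1⟩, .refl,
        (hlab' _ _).symm⟩
    · have hU := hS.valid ℓ U hv
      rw [cladeUnion_node_of_ne_empty ℓ hne] at hn ⊢
      rintro y ⟨C, hC, hyC⟩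
      obtain ⟨w, hw, rfl⟩ := hS.clade_cov ℓ U hv C hC
      have hlt : (cladeUnion w).ncard < n :=
        hn ▸ Set.ncard_lt_ncard (hU.ssubset_sUnion hC) hU.finite_sUnion
      obtain ⟨u, hu, hwu, rfl⟩ := ih _ hlt (hS.edge_mem _ hw).2 (hS.ne_ua_of_mem hw) rfl hyC
      exact ⟨u, hu, .head ⟨hw, by simp⟩ hwu, rfl⟩

lemma IsHSDAG.leavesBelow_eq_cladeUnion (hS : IsHSDAG V E) {lab' : HNode Y → Y}
    (hlab' : ∀ ℓ U, lab' (HNode.node ℓ U) = ℓ) (r : HNode Y) {v : HNode Y} (hv : v ∈ V)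
    (hvua : v ≠ HNode.ua) :
    leavesBelow (V \ {HNode.ua}) (E \ {(HNode.ua, r)}) lab' v = cladeUnion v :=
  (hS.leavesBelow_subset_cladeUnion hlab' r hvua).antisymm
    (hS.cladeUnion_subset_leavesBelow hlab' r hv hvua)

lemma IsHSDAG.treeNodeOf_eq_self (hS : IsHSDAG V E) {lab' : HNode Y → Y}
    (hlab' : ∀ ℓ U, lab' (HNode.node ℓ U) = ℓ) (r : HNode Y) {v : HNode Y} (hv : v ∈ V)
    (hvua : v ≠ HNode.ua) :
    treeNodeOf (V \ {HNode.ua}) (E \ {(HNode.ua, r)}) lab' v = v := by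
  cases v with
  | ua => exact absurd rfl hvua
  | node ℓ U =>
    simp only [treeNodeOf, hlab', HNode.node.injEq, true_and]
    ext C
    constructor
    · rintro ⟨w, hw, rfl⟩
      rw [hS.leavesBelow_eq_cladeUnion hlab' r (hS.edge_mem _ hw.1).2 (hS.ne_ua_of_mem hw.1)]
      exact hS.edge_clade _ _ _ hw.1
    · intro hC
      obtain ⟨w, hw, rfl⟩ := hS.clade_cov ℓ U hv C hC
      exact ⟨w, ⟨hw, by simp⟩,
        (hS.leavesBelow_eq_cladeUnion hlab' r (hS.edge_mem _ hw).2 (hS.ne_ua_of_mem hw)).symm⟩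

lemma IsHSDAG.treeToHist_strip (hS : IsHSDAG V E) {lab' : HNode Y → Y}
    (hlab' : ∀ ℓ U, lab' (HNode.node ℓ U) = ℓ) {r : HNode Y}
    (hUA : ∃! v, (HNode.ua, v) ∈ E) (hr : (HNode.ua, r) ∈ E) :
    treeToHistV (V \ {HNode.ua}) (E \ {(HNode.ua, r)}) lab' = V ∧
    treeToHistE (V \ {HNode.ua}) (E \ {(HNode.ua, r)}) r lab' = E := by
  have hself {v : HNode Y} (hv : v ∈ V) (hvua : v ≠ HNode.ua) :=
    hS.treeNodeOf_eq_self hlab' r hv hvua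
  constructor
  · ext v
    simp only [treeToHistV, Set.mem_insert_iff, Set.mem_image, Set.mem_sdiff,
      Set.mem_singleton_iff]
    constructor
    · rintro (rfl | ⟨w, ⟨hw, hwua⟩, rfl⟩)
      · exact hS.ua_mem
      · rwa [hself hw hwua]
    · intro hv
      by_cases hvua : v = HNode.ua
      exacts [Or.inl hvua, Or.inr ⟨v, ⟨hv, hvua⟩, hself hv hvua⟩]
  · ext ⟨a, b⟩
    simp only [treeToHistE, Set.mem_insert_iff, Set.mem_ofPred_eq, Prod.mk.injEq]
    rw [hself (hS.edge_mem _ hr).2 (hS.ne_ua_of_mem hr)]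
    constructor
    · rintro (⟨rfl, rfl⟩ | ⟨w₁, w₂, ⟨hw, hne⟩, rfl, rfl⟩)
      · exact hr
      · have hw₁ : w₁ ≠ HNode.ua := by
          rintro rfl
          exact hne (by simp [hUA.unique hw hr])
        rwa [hself (hS.edge_mem _ hw).1 hw₁, hself (hS.edge_mem _ hw).2 (hS.ne_ua_of_mem hw)]
    · intro hab
      by_cases ha : a = HNode.ua
      · subst ha
        exact Or.inl ⟨rfl, hUA.unique hab hr⟩
      · exact Or.inr ⟨a, b, ⟨hab, by simp [ha]⟩, (hself (hS.edge_mem _ hab).1 ha).symm,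
          (hself (hS.edge_mem _ hab).2 (hS.ne_ua_of_mem hab)).symm⟩

end HistoryToTree

section TreeToHistory

variable {α : Type v} {nodes : Set α} {edges : Set (α × α)} {root : α} {lab : α → Y}

def childClades (nodes : Set α) (edges : Set (α × α)) (lab : α → Y) (w : α) : Set (Set Y) :=
  {C | ∃ w', (w, w') ∈ edges ∧ C = leavesBelow nodes edges lab w'}

lemma treeNodeOf_eq (w : α) :
    treeNodeOf nodes edges lab w = HNode.node (lab w) (childClades nodes edges lab w) :=
  rfl

lemma treeNodeOf_ne_ua (w : α) : treeNodeOf nodes edges lab w ≠ HNode.ua := by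
  simp [treeNodeOf_eq]

lemma leavesBelow_subset_of_greach {a b : α} (h : GReach edges a b) :
    leavesBelow nodes edges lab b ⊆ leavesBelow nodes edges lab a := by
  rintro _ ⟨u, hu, hbu, rfl⟩
  exact ⟨u, hu, h.trans hbu, rfl⟩

lemma leavesBelow_of_isLeafIn {w : α} (hw : IsLeafIn nodes edges w) :
    leavesBelow nodes edges lab w = {lab w} := by
  ext y
  constructor
  · rintro ⟨u, -, hwu, rfl⟩
    rcases hwu.cases_head with rfl | ⟨c, hc, -⟩
    · rfl
    · exact absurd hc (hw.2 c)
  · rintro rfl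
    exact ⟨w, hw, .refl, rfl⟩

lemma sUnion_childClades {w c : α} (hc : (w, c) ∈ edges) :
    ⋃₀ childClades nodes edges lab w = leavesBelow nodes edges lab w := by
  ext y
  constructor
  · rintro ⟨_, ⟨c', hc', rfl⟩, hy⟩
    exact leavesBelow_subset_of_greach (.single hc') hy
  · rintro ⟨u, hu, hwu, rfl⟩
    rcases hwu.cases_head with rfl | ⟨c', hc', hc'u⟩
    · exact absurd hc (hu.2 c)
    · exact ⟨_, ⟨c', hc', rfl⟩, u, hu, hc'u, rfl⟩

lemma cladeUnion_treeNodeOf {w : α} (hw : w ∈ nodes) :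
    cladeUnion (treeNodeOf nodes edges lab w) = leavesBelow nodes edges lab w := by
  rw [treeNodeOf_eq]
  by_cases hleaf : ∃ c, (w, c) ∈ edges
  · obtain ⟨c, hc⟩ := hleaf
    have hne : (childClades nodes edges lab w).Nonempty := ⟨_, c, hc, rfl⟩
    rw [cladeUnion_node_of_ne_empty _ hne.ne_empty, sUnion_childClades hc]
  · simp only [not_exists] at hleaf
    have hempty : childClades nodes edges lab w = ∅ :=
      Set.eq_empty_of_forall_notMem fun _ ⟨c, hc, _⟩ => hleaf c hc
    rw [hempty, cladeUnion_node_empty, leavesBelow_of_isLeafIn ⟨hw, hleaf⟩]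

lemma reach_treeNodeOf_of_greach {a b : α} (h : GReach edges a b) :
    Reach (treeToHistE nodes edges root lab)
      (treeNodeOf nodes edges lab a) (treeNodeOf nodes edges lab b) :=
  Relation.ReflTransGen.lift (p := fun x y => (x, y) ∈ treeToHistE nodes edges root lab) _
    (fun a b hab => Or.inr ⟨a, b, hab, rfl⟩) _ _ h

lemma sep_treeToHistE_fst_ne_ua :
    {e ∈ treeToHistE nodes edges root lab | e.1 ≠ HNode.ua} =
      {e | ∃ a b, (a, b) ∈ edges ∧
        e = (treeNodeOf nodes edges lab a, treeNodeOf nodes edges lab b)} := by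
  ext e
  constructor
  · rintro ⟨rfl | he, hne⟩
    · exact absurd rfl hne
    · exact he
  · rintro ⟨a, b, hab, rfl⟩
    exact ⟨Or.inr ⟨a, b, hab, rfl⟩, treeNodeOf_ne_ua a⟩

namespace IsLabeledTree

lemma fst_mem (hT : IsLabeledTree nodes edges root lab) {a b : α} (h : (a, b) ∈ edges) :
    a ∈ nodes :=
  (hT.edge_mem _ h).1

lemma snd_mem (hT : IsLabeledTree nodes edges root lab) {a b : α} (h : (a, b) ∈ edges) :
    b ∈ nodes :=
  (hT.edge_mem _ h).2

-- A descendant of `w` whose set of descendants is minimal is a leaf, by acyclicity.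
lemma exists_isLeafIn_greach (hT : IsLabeledTree nodes edges root lab) {w : α}
    (hw : w ∈ nodes) : ∃ u, IsLeafIn nodes edges u ∧ GReach edges w u := by
  obtain ⟨u, ⟨hu, hwu⟩, hmin⟩ :=
    Set.Finite.exists_minimalFor (fun x => {y | GReach edges x y})
      {x | x ∈ nodes ∧ GReach edges w x} (hT.finite.subset fun _ hx => hx.1) ⟨w, hw, .refl⟩
  refine ⟨u, ⟨hu, fun c hc => ?_⟩, hwu⟩
  have hcu : GReach edges c u :=
    hmin ⟨hT.snd_mem hc, hwu.tail hc⟩ (fun _ hy => Relation.ReflTransGen.head hc hy)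
      Relation.ReflTransGen.refl
  exact hT.acyclic u (Relation.TransGen.head' hc hcu)

lemma leavesBelow_nonempty (hT : IsLabeledTree nodes edges root lab) {w : α} (hw : w ∈ nodes) :
    (leavesBelow nodes edges lab w).Nonempty := by
  obtain ⟨u, hu, hwu⟩ := hT.exists_isLeafIn_greach hw
  exact ⟨lab u, u, hu, hwu, rfl⟩

lemma greach_total_of_greach (hT : IsLabeledTree nodes edges root lab) {a b x : α}
    (ha : GReach edges a x) (hb : GReach edges b x) : GReach edges a b ∨ GReach edges b a := by
  induction ha with
  | refl => exact Or.inr hb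
  | @tail m x ham hmx ih =>
    rcases hb.cases_tail with rfl | ⟨q, hbq, hqx⟩
    · exact Or.inl (ham.tail hmx)
    · exact ih (hT.unique_parent _ _ _ hqx hmx ▸ hbq)

lemma not_greach_of_siblings (hT : IsLabeledTree nodes edges root lab) {w c₁ c₂ : α}
    (h₁ : (w, c₁) ∈ edges) (h₂ : (w, c₂) ∈ edges) (hne : c₁ ≠ c₂) :
    ¬ GReach edges c₁ c₂ := by
  intro h
  rcases h.cases_tail with rfl | ⟨q, hq, hqc⟩
  · exact hne rfl
  · rw [hT.unique_parent _ _ _ hqc h₂] at hq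
    exact hT.acyclic c₁ (Relation.TransGen.tail' hq h₁)

lemma disjoint_leavesBelow_of_siblings (hT : IsLabeledTree nodes edges root lab) {w c₁ c₂ : α}
    (h₁ : (w, c₁) ∈ edges) (h₂ : (w, c₂) ∈ edges) (hne : c₁ ≠ c₂) :
    Disjoint (leavesBelow nodes edges lab c₁) (leavesBelow nodes edges lab c₂) := by
  rw [Set.disjoint_left]
  rintro _ ⟨u, hu, h₁u, rfl⟩ ⟨u', hu', h₂u', hlab⟩
  obtain rfl := hT.leaf_inj u' u hu' hu hlab.symm
  rcases hT.greach_total_of_greach h₁u h₂u' with h | h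
  exacts [hT.not_greach_of_siblings h₁ h₂ hne h, hT.not_greach_of_siblings h₂ h₁ hne.symm h]

lemma exists_sibling (hT : IsLabeledTree nodes edges root lab) {w c : α} (hw : w ∈ nodes)
    (hc : (w, c) ∈ edges) : ∃ c', (w, c') ∈ edges ∧ c' ≠ c := by
  by_contra! h
  exact hT.no_unif w hw ⟨c, hc, h⟩

lemma leavesBelow_ssubset_of_mem (hT : IsLabeledTree nodes edges root lab) {w c : α}
    (hw : w ∈ nodes) (hc : (w, c) ∈ edges) :
    leavesBelow nodes edges lab c ⊂ leavesBelow nodes edges lab w := by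
  obtain ⟨c', hc', hne⟩ := hT.exists_sibling hw hc
  obtain ⟨y, hy⟩ := hT.leavesBelow_nonempty (hT.snd_mem hc')
  refine Set.ssubset_iff_subset_ne.mpr ⟨leavesBelow_subset_of_greach (.single hc), fun h => ?_⟩
  have hyc : y ∈ leavesBelow nodes edges lab c :=
    h ▸ leavesBelow_subset_of_greach (.single hc') hy
  exact Set.disjoint_left.mp (hT.disjoint_leavesBelow_of_siblings hc' hc hne) hy hyc

lemma injOn_leavesBelow (hT : IsLabeledTree nodes edges root lab) :
    Set.InjOn (leavesBelow nodes edges lab) nodes := by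
  have below_ne {a b : α} (ha : a ∈ nodes) (hab : GReach edges a b) (hne : a ≠ b) :
      leavesBelow nodes edges lab b ≠ leavesBelow nodes edges lab a := by
    rcases hab.cases_head with rfl | ⟨c, hac, hcb⟩
    · exact absurd rfl hne
    · exact ((leavesBelow_subset_of_greach hcb).trans_ssubset
        (hT.leavesBelow_ssubset_of_mem ha hac)).ne
  intro a ha b hb hab
  by_contra hne
  obtain ⟨_, u, hu, hau, rfl⟩ := hT.leavesBelow_nonempty ha
  have hub : lab u ∈ leavesBelow nodes edges lab b := hab ▸ ⟨u, hu, hau, rfl⟩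
  obtain ⟨u', hu', hbu', hlab⟩ := hub
  obtain rfl := hT.leaf_inj u' u hu' hu hlab.symm
  rcases hT.greach_total_of_greach hau hbu' with h | h
  exacts [below_ne ha h hne hab.symm, below_ne hb h (Ne.symm hne) hab]

lemma isPart_childClades (hT : IsLabeledTree nodes edges root lab) {w : α} (hw : w ∈ nodes) :
    IsPart (childClades nodes edges lab w) := by
  refine ⟨?_, ?_, ?_, ?_, ?_⟩
  · rintro _ ⟨c, hc, rfl⟩
    exact (hT.leavesBelow_nonempty (hT.snd_mem hc)).ne_empty
  · rintro _ ⟨c₁, h₁, rfl⟩ _ ⟨c₂, h₂, rfl⟩ hne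
    exact hT.disjoint_leavesBelow_of_siblings h₁ h₂ fun h => hne (h ▸ rfl)
  · intro C hC
    obtain ⟨c, hc, rfl⟩ : C ∈ childClades nodes edges lab w := hC ▸ rfl
    obtain ⟨c', hc', hne⟩ := hT.exists_sibling hw hc
    have hc'C : leavesBelow nodes edges lab c' ∈ ({leavesBelow nodes edges lab c} : Set _) :=
      hC ▸ ⟨c', hc', rfl⟩
    exact hne (hT.injOn_leavesBelow (hT.snd_mem hc') (hT.snd_mem hc) hc'C)
  · refine ((hT.finite.subset fun c (hc : (w, c) ∈ edges) => hT.snd_mem hc).image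
      (leavesBelow nodes edges lab)).subset ?_
    rintro _ ⟨c, hc, rfl⟩
    exact ⟨c, hc, rfl⟩
  · rintro _ ⟨c, -, rfl⟩
    refine (hT.finite.image lab).subset ?_
    rintro _ ⟨u, hu, -, rfl⟩
    exact ⟨u, hu.1, rfl⟩

lemma injOn_treeNodeOf (hT : IsLabeledTree nodes edges root lab) :
    Set.InjOn (treeNodeOf nodes edges lab) nodes := fun a ha b hb h =>
  hT.injOn_leavesBelow ha hb <| by
    rw [← cladeUnion_treeNodeOf ha, h, cladeUnion_treeNodeOf hb]

lemma bijOn_treeNodeOf (hT : IsLabeledTree nodes edges root lab) :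
    Set.BijOn (treeNodeOf nodes edges lab) nodes (treeToHistV nodes edges lab \ {HNode.ua}) := by
  refine ⟨fun w hw => ⟨Or.inr ⟨w, hw, rfl⟩, treeNodeOf_ne_ua w⟩, hT.injOn_treeNodeOf,
    ?_⟩
  rintro v ⟨h | ⟨w, hw, rfl⟩, hv⟩
  · exact absurd h hv
  · exact ⟨w, hw, rfl⟩

lemma treeNodeOf_mem_treeToHistE_iff (hT : IsLabeledTree nodes edges root lab) {w : α}
    (hw : w ∈ nodes) {v : HNode Y} :
    (treeNodeOf nodes edges lab w, v) ∈ treeToHistE nodes edges root lab ↔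
      ∃ c, (w, c) ∈ edges ∧ v = treeNodeOf nodes edges lab c := by
  constructor
  · rintro (h | ⟨a, c, hac, h⟩)
    · exact absurd (Prod.ext_iff.mp h).1 (treeNodeOf_ne_ua w)
    · obtain ⟨hwa, rfl⟩ := Prod.ext_iff.mp h
      obtain rfl := hT.injOn_treeNodeOf hw (hT.fst_mem hac) hwa
      exact ⟨c, hac, rfl⟩
  · rintro ⟨c, hc, rfl⟩
    exact Or.inr ⟨w, c, hc, rfl⟩

lemma exists_of_node_mem_treeToHistV {ℓ : Y} {U : Set (Set Y)}
    (h : HNode.node ℓ U ∈ treeToHistV nodes edges lab) :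
    ∃ w ∈ nodes, ℓ = lab w ∧ U = childClades nodes edges lab w := by
  rcases h with h | ⟨w, hw, h⟩
  · cases h
  · rw [treeNodeOf_eq, HNode.node.injEq] at h
    exact ⟨w, hw, h.1.symm, h.2.symm⟩

lemma isHSDAG_treeToHist (hT : IsLabeledTree nodes edges root lab) :
    IsHSDAG (treeToHistV nodes edges lab) (treeToHistE nodes edges root lab) where
  ua_mem := Set.mem_insert _ _
  valid ℓ U h := by
    obtain ⟨w, hw, rfl, rfl⟩ := exists_of_node_mem_treeToHistV h
    exact hT.isPart_childClades hw
  edge_mem e he := by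
    rcases he with rfl | ⟨a, b, hab, rfl⟩
    · exact ⟨Set.mem_insert _ _, Or.inr ⟨root, hT.root_mem, rfl⟩⟩
    · exact ⟨Or.inr ⟨a, hT.fst_mem hab, rfl⟩, Or.inr ⟨b, hT.snd_mem hab, rfl⟩⟩
  reach_ua v hv := by
    rcases hv with rfl | ⟨w, hw, rfl⟩
    · exact .refl
    · exact .head (Set.mem_insert _ _) (reach_treeNodeOf_of_greach (hT.reach_root w hw))
  no_in_ua v hv := by
    rcases hv with h | ⟨a, b, -, h⟩
    · exact treeNodeOf_ne_ua root (Prod.ext_iff.mp h).2.symm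
    · exact treeNodeOf_ne_ua b (Prod.ext_iff.mp h).2.symm
  edge_clade ℓ U v he := by
    rcases he with h | ⟨a, b, hab, h⟩
    · cases (Prod.ext_iff.mp h).1
    · obtain ⟨ha, rfl⟩ := Prod.ext_iff.mp h
      rw [treeNodeOf_eq, HNode.node.injEq] at ha
      rw [ha.2, cladeUnion_treeNodeOf (hT.snd_mem hab)]
      exact ⟨b, hab, rfl⟩
  clade_cov ℓ U h C hC := by
    obtain ⟨w, hw, rfl, rfl⟩ := exists_of_node_mem_treeToHistV h
    obtain ⟨c, hc, rfl⟩ := hC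
    exact ⟨_, Or.inr ⟨w, c, hc, rfl⟩, cladeUnion_treeNodeOf (hT.snd_mem hc)⟩

lemma isHistory_treeToHist (hT : IsLabeledTree nodes edges root lab) :
    IsHistory (treeToHistV nodes edges lab) (treeToHistE nodes edges root lab) := by
  refine ⟨hT.isHSDAG_treeToHist, ⟨_, Set.mem_insert _ _, fun v hv => ?_⟩, ?_⟩
  · rcases hv with h | ⟨a, b, -, h⟩
    · exact (Prod.ext_iff.mp h).2
    · exact absurd (Prod.ext_iff.mp h).1.symm (treeNodeOf_ne_ua a)
  · intro ℓ U h C hC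
    obtain ⟨w, hw, rfl, rfl⟩ := exists_of_node_mem_treeToHistV h
    obtain ⟨c, hc, rfl⟩ := hC
    have hcn := hT.snd_mem hc
    refine ⟨_, ⟨(hT.treeNodeOf_mem_treeToHistE_iff hw).2 ⟨c, hc, rfl⟩,
      cladeUnion_treeNodeOf hcn⟩, ?_⟩
    rintro _ ⟨he, hcu⟩
    obtain ⟨c', hc', rfl⟩ := (hT.treeNodeOf_mem_treeToHistE_iff hw).1 he
    rw [cladeUnion_treeNodeOf (hT.snd_mem hc')] at hcu
    rw [hT.injOn_leavesBelow (hT.snd_mem hc') hcn hcu]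

end IsLabeledTree

end TreeToHistory

/-- Lemma `correspondence_bijection`: the history-to-tree and
tree-to-history maps are mutually inverse up to label-preserving isomorphism, giving a
bijective correspondence between histories in the complete history sDAG on labels `Y` and
isomorphism classes of internally labeled trees with labels in `Y`. -/
theorem correspondence_bijection {α : Type v}
    (lab' : HNode Y → Y) (hlab' : ∀ ℓ U, lab' (HNode.node ℓ U) = ℓ) :
    -- history → tree → history recovers the original history
    (∀ (Vt : Set (HNode Y)) (Et : Set (HNode Y × HNode Y)) (r : HNode Y),
      HistoryIn (completeV Y) (completeE Y) Vt Et → (HNode.ua, r) ∈ Et →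
        treeToHistV (Vt \ {HNode.ua}) (Et \ {(HNode.ua, r)}) lab' = Vt ∧
        treeToHistE (Vt \ {HNode.ua}) (Et \ {(HNode.ua, r)}) r lab' = Et) ∧
    -- tree → history → tree recovers a labeled tree isomorphic to the original,
    -- and the associated history is a history in the complete history sDAG
    (∀ (nodes : Set α) (edges : Set (α × α)) (root : α) (lab : α → Y),
      IsLabeledTree nodes edges root lab →
        HistoryIn (completeV Y) (completeE Y)
          (treeToHistV nodes edges lab) (treeToHistE nodes edges root lab) ∧
        ∃ h : α → HNode Y,
          Set.BijOn h nodes (treeToHistV nodes edges lab \ {HNode.ua}) ∧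
          (∀ w ∈ nodes, lab' (h w) = lab w) ∧
          {e ∈ treeToHistE nodes edges root lab | e.1 ≠ HNode.ua} =
            {e | ∃ a b, (a, b) ∈ edges ∧ e = (h a, h b)}) := by
  refine ⟨fun Vt Et r hH hr => hH.2.2.1.treeToHist_strip hlab' hH.2.2.2.1 hr,
    fun nodes edges root lab hT => ⟨hT.isHistory_treeToHist.historyIn_complete, ?_⟩⟩
  exact ⟨treeNodeOf nodes edges lab, hT.bijOn_treeNodeOf, fun w _ => hlab' _ _,
    sep_treeToHistE_fst_ne_ua⟩

end HistorySDAGs
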